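/- ∫_{-∞}^{+∞} (sinh²(t)/(2cosh⁴(t))) · e^{-t} · (2·arctan(e^{t}) - 1/cosh(t)) dt = π²/8 - 10/9. Equivalently, with y₁(t) = -(sinh(t)/cosh²(t))e^{-t} and v₄⁰(t) = -(sinh(t)/(2cosh²(t)))e^{-t}, one has ∫_{-∞}^{+∞} y₁(t)·v₄⁰(t)·e^{t}·(2·arctan(e^{t}) - 1/cosh(t)) dt = π²/8 - 10/9. -/

import Mathlib

/-!
In the coordinates `a = arctan eᵗ`, `τ = tanh t`, `σ = sech t`, which satisfy `a' = σ / 2`,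
`τ' = σ²`, `σ' = -τσ` and `τ² + σ² = 1`, the integrand is `τ²σ(1 - τ)(2a - σ) / 2`
(because `e⁻ᵗ = cosh t (1 - tanh t)`), and this is the derivative along the flow of an explicit
quartic polynomial `P(a, τ, σ)`. Since `2 arctan eᵗ ≥ sech t`, the integrand is nonnegative,
hence integrable, and the integral is `P(π/2, 1, 0) - P(0, -1, 0) = (π²/8 - 5/9) - 5/9`.
-/

open MeasureTheory Real Filter Topology Set

theorem integrable_of_hasDerivAt_of_nonneg {F f : ℝ → ℝ} {a b : ℝ}
    (hF : ∀ t, HasDerivAt F (f t) t) (hf : ∀ t, 0 ≤ f t)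
    (hbot : Tendsto F atBot (𝓝 a)) (htop : Tendsto F atTop (𝓝 b)) : Integrable f := by
  have hcover : AECover volume atTop fun i : ℝ => Ioc (-i) i :=
    aecover_Ioc tendsto_neg_atTop_atBot tendsto_id
  have hint : ∀ i : ℝ, IntegrableOn f (Ioc (-i) i) := fun i =>
    intervalIntegral.integrableOn_deriv_of_nonneg
      (fun t _ => (hF t).continuousAt.continuousWithinAt) (fun t _ => hF t) (fun t _ => hf t)
  have hFTC : ∀ᶠ i in atTop, F i - F (-i) = ∫ t in Ioc (-i) i, f t := by
    filter_upwards [eventually_ge_atTop 0] with i hi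
    rw [← intervalIntegral.integral_of_le (by linarith),
      intervalIntegral.integral_eq_sub_of_hasDerivAt (fun t _ => hF t)
        ((intervalIntegrable_iff_integrableOn_Ioc_of_le (by linarith)).2 (hint i))]
  exact hcover.integrable_of_integral_tendsto_of_nonneg_ae (b - a) hint (ae_of_all _ hf)
    ((htop.sub (hbot.comp tendsto_neg_atTop_atBot)).congr' hFTC)

namespace Real

theorem tanh_sq_add_inv_cosh_sq (t : ℝ) : tanh t ^ 2 + (cosh t)⁻¹ ^ 2 = 1 := by
  have := (cosh_pos t).ne'
  rw [tanh_eq_sinh_div_cosh]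
  field_simp
  linarith [cosh_sq t]

theorem hasDerivAt_tanh (t : ℝ) : HasDerivAt tanh ((cosh t)⁻¹ ^ 2) t := by
  have := (cosh_pos t).ne'
  have h := (hasDerivAt_sinh t).div (hasDerivAt_cosh t) this
  rw [show tanh = fun t => sinh t / cosh t from funext tanh_eq_sinh_div_cosh]
  refine h.congr_deriv ?_
  field_simp
  linarith [cosh_sq t]

theorem hasDerivAt_inv_cosh (t : ℝ) :
    HasDerivAt (fun t => (cosh t)⁻¹) (-(tanh t * (cosh t)⁻¹)) t := by
  have := (cosh_pos t).ne'
  refine ((hasDerivAt_cosh t).inv this).congr_deriv ?_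
  rw [tanh_eq_sinh_div_cosh]
  field_simp

theorem hasDerivAt_arctan_exp (t : ℝ) :
    HasDerivAt (fun t => arctan (exp t)) ((cosh t)⁻¹ / 2) t := by
  refine ((hasDerivAt_arctan (exp t)).comp t (hasDerivAt_exp t)).congr_deriv ?_
  have := exp_pos t
  rw [cosh_eq, exp_neg]
  field_simp
  ring

theorem tendsto_cosh_atTop : Tendsto cosh atTop atTop :=
  tendsto_atTop_mono (fun t => by rw [cosh_eq]; linarith [exp_pos (-t)])
    (tendsto_exp_atTop.atTop_div_const two_pos)

theorem tendsto_cosh_atBot : Tendsto cosh atBot atTop := by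
  simpa [Function.comp_def] using tendsto_cosh_atTop.comp tendsto_neg_atBot_atTop

theorem tendsto_tanh_atTop : Tendsto tanh atTop (𝓝 1) := by
  have h (t : ℝ) : tanh t = 1 - exp (-t) * (cosh t)⁻¹ := by
    have := (cosh_pos t).ne'
    rw [tanh_eq_sinh_div_cosh, ← cosh_sub_sinh]
    field_simp
    ring
  simpa [funext h] using tendsto_const_nhds.sub
    (tendsto_exp_neg_atTop_nhds_zero.mul tendsto_cosh_atTop.inv_tendsto_atTop)

theorem tendsto_tanh_atBot : Tendsto tanh atBot (𝓝 (-1)) := by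
  simpa [Function.comp_def] using (tendsto_tanh_atTop.comp tendsto_neg_atBot_atTop).neg

theorem tendsto_arctan_exp_atTop : Tendsto (fun t => arctan (exp t)) atTop (𝓝 (π / 2)) :=
  (tendsto_nhds_of_tendsto_nhdsWithin tendsto_arctan_atTop).comp tendsto_exp_atTop

theorem tendsto_arctan_exp_atBot : Tendsto (fun t => arctan (exp t)) atBot (𝓝 0) := by
  simpa [Function.comp_def] using (continuous_arctan.tendsto 0).comp tendsto_exp_atBot

theorem inv_cosh_le_two_mul_arctan_exp (t : ℝ) : (cosh t)⁻¹ ≤ 2 * arctan (exp t) := by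
  have hmono : Monotone fun t => 2 * arctan (exp t) - (cosh t)⁻¹ := by
    refine monotone_of_hasDerivAt_nonneg
      (fun t => ((hasDerivAt_arctan_exp t).const_mul 2).sub (hasDerivAt_inv_cosh t)) fun t => ?_
    have := neg_one_lt_tanh t
    have := inv_pos.2 (cosh_pos t)
    simp only [Pi.zero_apply]
    nlinarith
  have hlim : Tendsto (fun t => 2 * arctan (exp t) - (cosh t)⁻¹) atBot (𝓝 0) := by
    simpa using (tendsto_arctan_exp_atBot.const_mul 2).sub tendsto_cosh_atBot.inv_tendsto_atTop
  linarith [hmono.le_of_tendsto hlim t]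

end Real

namespace Butterfly

noncomputable def primitivePoly (a τ σ : ℝ) : ℝ :=
  a ^ 2 / 2 + (σ - τ * σ / 2 - σ ^ 3 / 3) * a
    - τ / 3 - 2 * τ ^ 3 / 9 - 3 * σ ^ 2 / 8 + σ ^ 4 / 8

theorem continuous_primitivePoly :
    Continuous fun p : ℝ × ℝ × ℝ => primitivePoly p.1 p.2.1 p.2.2 := by
  unfold primitivePoly
  fun_prop

theorem tendsto_primitivePoly {α : Type*} {l : Filter α} {A T S : α → ℝ} {a τ σ : ℝ}
    (hA : Tendsto A l (𝓝 a)) (hT : Tendsto T l (𝓝 τ)) (hS : Tendsto S l (𝓝 σ)) :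
    Tendsto (fun x => primitivePoly (A x) (T x) (S x)) l (𝓝 (primitivePoly a τ σ)) := by
  simpa only [Function.comp_def] using
    (continuous_primitivePoly.tendsto (a, τ, σ)).comp (hA.prodMk_nhds (hT.prodMk_nhds hS))

/-- `(arctan eᵗ, tanh t, sech t)` solves this system on the circle `τ² + σ² = 1`. -/
theorem hasDerivAt_primitivePoly {A T S : ℝ → ℝ} {t : ℝ}
    (hA : HasDerivAt A (S t / 2) t) (hT : HasDerivAt T (S t ^ 2) t)
    (hS : HasDerivAt S (-(T t * S t)) t) (hTS : T t ^ 2 + S t ^ 2 = 1) :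
    HasDerivAt (fun x => primitivePoly (A x) (T x) (S x))
      (T t ^ 2 * S t * (1 - T t) * (2 * A t - S t) / 2) t := by
  have H := ((hA.pow 2).div_const 2).add
    ((((hS.sub ((hT.mul hS).div_const 2)).sub ((hS.pow 3).div_const 3)).mul hA)) |>.sub
    (hT.div_const 3) |>.sub (((hT.pow 3).const_mul 2).div_const 9) |>.sub
    (((hS.pow 2).const_mul 3).div_const 8) |>.add ((hS.pow 4).div_const 8)
  refine H.congr_deriv ?_
  simp only [Pi.sub_apply, Pi.mul_apply, Pi.pow_apply, Nat.cast_ofNat]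
  linear_combination (-(A t * (S t / 2 - T t * S t) + S t ^ 2 / 6 + T t * S t ^ 2 / 2)) * hTS

noncomputable def integrand (t : ℝ) : ℝ :=
  sinh t ^ 2 / (2 * cosh t ^ 4) * exp (-t) * (2 * arctan (exp t) - 1 / cosh t)

noncomputable def primitive (t : ℝ) : ℝ :=
  primitivePoly (arctan (exp t)) (tanh t) (cosh t)⁻¹

theorem integrand_eq (t : ℝ) :
    integrand t =
      tanh t ^ 2 * (cosh t)⁻¹ * (1 - tanh t) * (2 * arctan (exp t) - (cosh t)⁻¹) / 2 := by
  have := (cosh_pos t).ne'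
  rw [integrand, tanh_eq_sinh_div_cosh, ← cosh_sub_sinh]
  field_simp

theorem integrand_nonneg (t : ℝ) : 0 ≤ integrand t := by
  rw [integrand_eq]
  have := sub_pos.2 (tanh_lt_one t)
  have := sub_nonneg.2 (inv_cosh_le_two_mul_arctan_exp t)
  have := inv_pos.2 (cosh_pos t)
  positivity

theorem hasDerivAt_primitive (t : ℝ) : HasDerivAt primitive (integrand t) t := by
  rw [integrand_eq]
  exact hasDerivAt_primitivePoly (hasDerivAt_arctan_exp t) (hasDerivAt_tanh t)
    (hasDerivAt_inv_cosh t) (tanh_sq_add_inv_cosh_sq t)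

theorem tendsto_primitive_atBot : Tendsto primitive atBot (𝓝 (primitivePoly 0 (-1) 0)) :=
  tendsto_primitivePoly tendsto_arctan_exp_atBot tendsto_tanh_atBot
    tendsto_cosh_atBot.inv_tendsto_atTop

theorem tendsto_primitive_atTop : Tendsto primitive atTop (𝓝 (primitivePoly (π / 2) 1 0)) :=
  tendsto_primitivePoly tendsto_arctan_exp_atTop tendsto_tanh_atTop
    tendsto_cosh_atTop.inv_tendsto_atTop

theorem integral_integrand : ∫ t, integrand t = π ^ 2 / 8 - 10 / 9 := by
  rw [integral_of_hasDerivAt_of_tendsto hasDerivAt_primitive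
    (integrable_of_hasDerivAt_of_nonneg hasDerivAt_primitive integrand_nonneg
      tendsto_primitive_atBot tendsto_primitive_atTop)
    tendsto_primitive_atBot tendsto_primitive_atTop, primitivePoly, primitivePoly]
  ring

end Butterfly

/-- The integral `∫ (sinh² t/(2cosh⁴ t)) e^{-t} (2 arctan eᵗ - 1/cosh t) dt
= π²/8 - 10/9`, equivalently `∫ y₁ v₄⁰ eᵗ (2 arctan eᵗ - 1/cosh t) dt
= π²/8 - 10/9`. -/
theorem integral_y1_v40_z1 :
    let y₁ : ℝ → ℝ := fun t => -(Real.sinh t / (Real.cosh t) ^ 2) * Real.exp (-t)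
    let v₄ : ℝ → ℝ := fun t => -(Real.sinh t / (2 * (Real.cosh t) ^ 2)) * Real.exp (-t)
    (∫ t : ℝ, ((Real.sinh t) ^ 2 / (2 * (Real.cosh t) ^ 4)) * Real.exp (-t) *
        (2 * Real.arctan (Real.exp t) - 1 / Real.cosh t))
      = Real.pi ^ 2 / 8 - 10 / 9 ∧
    (∫ t : ℝ, y₁ t * v₄ t * Real.exp t *
        (2 * Real.arctan (Real.exp t) - 1 / Real.cosh t))
      = Real.pi ^ 2 / 8 - 10 / 9 := by
  intro y₁ v₄
  have hy₁v₄ (t : ℝ) : y₁ t * v₄ t * exp t = sinh t ^ 2 / (2 * cosh t ^ 4) * exp (-t) := by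
    have := (cosh_pos t).ne'
    simp only [y₁, v₄, exp_neg]
    field_simp
  simp_rw [hy₁v₄]
  exact ⟨Butterfly.integral_integrand, Butterfly.integral_integrand⟩
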